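/- arXiv:2601.09880 — 3 statements merged into one kernel-verified Lean document; each statement's English description precedes it below -/
import Mathlib

section
/- Let A be a linear endomorphism of a finite-dimensional normed space and suppose G = {v : Aᵖv → 0} is a nonzero subspace. Then the operator norms of the restrictions Aᵖ|_G tend to 0 as p → ∞. -/
/-! On a finite-dimensional space every operator is the sum, over a basis `v`, of the rank-one
maps `x ↦ v.coord j x • S (v j)`, so pointwise convergence already gives convergence in operator
norm. By definition of `G`, the powers of `A` restricted to `G` tend to `0` pointwise. -/

open Filter Topology

theorem Module.End.coe_pow_restrict_apply {R M : Type*} [Semiring R] [AddCommMonoid M]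
    [Module R M] {f : Module.End R M} {p : Submodule R M} (h : ∀ x ∈ p, f x ∈ p) (n : ℕ)
    (x : p) : ((f.restrict h ^ n) x : M) = (f ^ n) x := by
  rw [Module.End.pow_restrict, LinearMap.coe_restrict_apply]

namespace ContinuousLinearMap

variable {𝕜 E F : Type*} [NontriviallyNormedField 𝕜] [CompleteSpace 𝕜]
  [NormedAddCommGroup E] [NormedSpace 𝕜 E] [FiniteDimensional 𝕜 E]
  [SeminormedAddCommGroup F] [NormedSpace 𝕜 F]

theorem eq_sum_smulRight_basis {ι : Type*} [Fintype ι] (v : Module.Basis ι 𝕜 E)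
    (S : E →L[𝕜] F) :
    S = ∑ j, (LinearMap.toContinuousLinearMap (v.coord j)).smulRight (S (v j)) := by
  classical
  exact ContinuousLinearMap.coe_injective (v.ext fun j => by simp [Finsupp.single_apply])

theorem tendsto_of_tendsto_apply {ι : Type*} {l : Filter ι} {T : ι → E →L[𝕜] F}
    {T₀ : E →L[𝕜] F} (h : ∀ x, Tendsto (fun i => T i x) l (𝓝 (T₀ x))) :
    Tendsto T l (𝓝 T₀) := by
  set v := Module.finBasis 𝕜 E
  rw [eq_sum_smulRight_basis v T₀, funext fun i => eq_sum_smulRight_basis v (T i)]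
  exact tendsto_finsetSum _ fun j _ =>
    ((smulRightL 𝕜 E F _).continuous.tendsto _).comp (h (v j))

end ContinuousLinearMap

theorem stmt1_general {F : Type*} [NormedAddCommGroup F] [NormedSpace ℝ F]
    [FiniteDimensional ℝ F] (A : F →ₗ[ℝ] F) (G : Submodule ℝ F)
    (hG : ∀ v : F, v ∈ G ↔ Tendsto (fun p : ℕ => (A ^ p) v) atTop (nhds 0))
    (hinv : ∀ x ∈ G, A x ∈ G) :
    Tendsto (fun p : ℕ =>
        ‖LinearMap.toContinuousLinearMap ((A.restrict hinv) ^ p)‖) atTop (nhds 0) := by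
  have hpt : ∀ v : G, Tendsto (fun p : ℕ => (A.restrict hinv ^ p) v) atTop (𝓝 0) := fun v => by
    rw [tendsto_subtype_rng]
    simpa only [Module.End.coe_pow_restrict_apply, ZeroMemClass.coe_zero] using (hG v).1 v.2
  simpa using (ContinuousLinearMap.tendsto_of_tendsto_apply
    (T := fun p => LinearMap.toContinuousLinearMap (A.restrict hinv ^ p)) (T₀ := 0) hpt).norm

/-- If `G = {v : Aᵖ v → 0}` is a nonzero subspace of a finite-dimensional normed
space, invariant under `A`, then the operator norms of the restrictions `Aᵖ|_G`
tend to `0`. -/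
theorem stmt1 {F : Type*} [NormedAddCommGroup F] [NormedSpace ℝ F]
    [FiniteDimensional ℝ F] (A : F →ₗ[ℝ] F) (G : Submodule ℝ F)
    (hG : ∀ v : F, v ∈ G ↔ Tendsto (fun p : ℕ => (A ^ p) v) atTop (nhds 0))
    (hGne : G ≠ ⊥) (hinv : ∀ x ∈ G, A x ∈ G) :
    Tendsto (fun p : ℕ =>
        ‖LinearMap.toContinuousLinearMap ((A.restrict hinv) ^ p)‖) atTop (nhds 0) :=
  stmt1_general A G hG hinv
end

section
/- Let f be the tent map on ℝ (f(x)=2x for x∈[0,1/2], f(x)=2(1−x) for x∈(1/2,1], f(x)=0 elsewhere). If V : ℝ → ℝ is continuous and satisfies V(f(x)) ≤ V(x) for all x, then V is constant on [0,1]. -/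
/-!
Along a backward orbit `V` can only grow, so `V x ≤ V z` whenever `tentMap^[n] z = x`.
Each of the two inverse branches `w ↦ w / 2` and `w ↦ 1 - w / 2` of the tent map halves
distances, so the iterated preimages of any `x ∈ [0,1]` are `2⁻ⁿ`-dense in `[0,1]`;
continuity of `V` then gives `V x ≤ V y` for all `x, y ∈ [0,1]`.
-/

/-- The tent map on `ℝ`. -/
noncomputable def tentMap (x : ℝ) : ℝ :=
  if x ∈ Set.Icc (0 : ℝ) (1 / 2) then 2 * x
  else if x ∈ Set.Ioc (1 / 2 : ℝ) 1 then 2 * (1 - x)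
  else 0

open Set Function

section Lyapunov

variable {α β : Type*} {f : α → α} {V : α → β}

theorem apply_iterate_le_of_apply_le [Preorder β] (hdec : ∀ x, V (f x) ≤ V x) (n : ℕ) (z : α) :
    V (f^[n] z) ≤ V z := by
  induction n generalizing z with
  | zero => rfl
  | succ n ih => exact (ih (f z)).trans (hdec z)

theorem le_of_mem_closure_iterate_preimage [TopologicalSpace α] [TopologicalSpace β]
    [Preorder β] [OrderClosedTopology β] (hV : Continuous V) (hdec : ∀ x, V (f x) ≤ V x)
    {x y : α} (hy : y ∈ closure (⋃ n, f^[n] ⁻¹' {x})) : V x ≤ V y := by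
  have hsub : (⋃ n, f^[n] ⁻¹' {x}) ⊆ {z | V x ≤ V z} := by
    simp only [iUnion_subset_iff]
    rintro n z rfl
    exact apply_iterate_le_of_apply_le hdec n z
  exact closure_minimal hsub (isClosed_le continuous_const hV) hy

end Lyapunov

theorem tentMap_div_two {w : ℝ} (hw : w ∈ Icc (0 : ℝ) 1) : tentMap (w / 2) = w := by
  rw [tentMap, if_pos ⟨by linarith [hw.1], by linarith [hw.2]⟩]
  ring

theorem tentMap_one_sub_div_two {w : ℝ} (hw : w ∈ Icc (0 : ℝ) 1) :
    tentMap (1 - w / 2) = w := by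
  rcases hw.2.eq_or_lt with rfl | hw1
  · norm_num [tentMap]
  · rw [tentMap, if_neg (fun h => by linarith [h.2]),
      if_pos ⟨by linarith, by linarith [hw.1]⟩]
    ring

theorem exists_tentMap_iterate_eq_near {x : ℝ} (hx : x ∈ Icc (0 : ℝ) 1) (n : ℕ) :
    ∀ y ∈ Icc (0 : ℝ) 1, ∃ z ∈ Icc (0 : ℝ) 1, tentMap^[n] z = x ∧ |z - y| ≤ (1 / 2) ^ n := by
  induction n with
  | zero =>
    intro y hy
    refine ⟨x, hx, rfl, ?_⟩
    rw [pow_zero, abs_le]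
    constructor <;> linarith [hx.1, hx.2, hy.1, hy.2]
  | succ n ih =>
    intro y hy
    rcases le_or_gt y (1 / 2) with hy2 | hy2
    · obtain ⟨w, hw, hfw, hclose⟩ := ih (2 * y) ⟨by linarith [hy.1], by linarith⟩
      refine ⟨w / 2, ⟨by linarith [hw.1], by linarith [hw.2]⟩, ?_, ?_⟩
      · rw [iterate_succ_apply, tentMap_div_two hw, hfw]
      · calc |w / 2 - y| = |w - 2 * y| / 2 := by
              rw [show w / 2 - y = (w - 2 * y) / 2 by ring, abs_div, abs_two]
          _ ≤ (1 / 2) ^ (n + 1) := by rw [pow_succ]; linarith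
    · obtain ⟨w, hw, hfw, hclose⟩ := ih (2 * (1 - y)) ⟨by linarith [hy.2], by linarith⟩
      refine ⟨1 - w / 2, ⟨by linarith [hw.2], by linarith [hw.1]⟩, ?_, ?_⟩
      · rw [iterate_succ_apply, tentMap_one_sub_div_two hw, hfw]
      · calc |1 - w / 2 - y| = |w - 2 * (1 - y)| / 2 := by
              rw [show 1 - w / 2 - y = -((w - 2 * (1 - y)) / 2) by ring, abs_neg, abs_div,
                abs_two]
          _ ≤ (1 / 2) ^ (n + 1) := by rw [pow_succ]; linarith

theorem mem_closure_tentMap_iterate_preimage {x y : ℝ} (hx : x ∈ Icc (0 : ℝ) 1)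
    (hy : y ∈ Icc (0 : ℝ) 1) : y ∈ closure (⋃ n, tentMap^[n] ⁻¹' {x}) := by
  refine Metric.mem_closure_iff.2 fun ε hε => ?_
  obtain ⟨n, hn⟩ := exists_pow_lt_of_lt_one hε (by norm_num : (1 / 2 : ℝ) < 1)
  obtain ⟨z, -, hfz, hclose⟩ := exists_tentMap_iterate_eq_near hx n y hy
  refine ⟨z, mem_iUnion.2 ⟨n, hfz⟩, ?_⟩
  rw [Real.dist_eq, abs_sub_comm]
  exact hclose.trans_lt hn

/-- A continuous Lyapunov function for the tent map is constant on `[0,1]`. -/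
theorem stmt7 (V : ℝ → ℝ) (hV : Continuous V)
    (hdec : ∀ x, V (tentMap x) ≤ V x) :
    ∀ x ∈ Set.Icc (0 : ℝ) 1, ∀ y ∈ Set.Icc (0 : ℝ) 1, V x = V y := by
  have hle : ∀ x ∈ Icc (0 : ℝ) 1, ∀ y ∈ Icc (0 : ℝ) 1, V x ≤ V y := fun x hx y hy =>
    le_of_mem_closure_iterate_preimage hV hdec (mem_closure_tentMap_iterate_preimage hx hy)
  intro x hx y hy
  exact le_antisymm (hle x hx y hy) (hle y hy x hx)
end

section
/- Let f : ℝᵈ → ℝᵈ be differentiable at a fixed point x* with f(x*) = x*, and let V ∈ C² satisfy V∘f ≤ V and ∇V(x*) = 0. Then the matrix ∇²V(x*) − Df(x*)ᵀ ∇²V(x*) Df(x*) is positive semidefinite. -/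
/-!
Since `∇V(x*) = 0`, Taylor's formula gives `V(x* + u) = V(x*) + ½ D²V(x*)(u, u) + o(‖u‖²)`.
Evaluate it along the curves `t ↦ x* + t • v` and `t ↦ f (x* + t • v)`, which leave `x*` with
velocities `v` and `Df(x*) v`; dividing `V (f (x* + t • v)) - V x* ≤ V (x* + t • v) - V x*`
by `t²` and letting `t → 0` compares the two quadratic values. The remainder has to be
`o(‖u‖²)` uniformly in the direction of `u`, because the second curve is differentiable only at
`t = 0`.
-/

open scoped RealInnerProductSpace
open Asymptotics Filter Set Topology

section Taylor

variable {E F : Type*} [NormedAddCommGroup E] [NormedSpace ℝ E]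
  [NormedAddCommGroup F] [NormedSpace ℝ F]
  {V : E → F} {V' : E → E →L[ℝ] F} {B : E →L[ℝ] E →L[ℝ] F} {x : E}

theorem isLittleO_sub_taylor_two (hV : ∀ᶠ y in 𝓝 x, HasFDerivAt V (V' y) y)
    (hV' : HasFDerivAt V' B x) :
    (fun u => V (x + u) - V x - V' x u - (1 / 2 : ℝ) • B u u) =o[𝓝 0] fun u => ‖u‖ ^ 2 := by
  refine isLittleO_iff.2 fun ε hε => ?_
  have hshift : ∀ᶠ h in 𝓝 (0 : E), HasFDerivAt V (V' (x + h)) (x + h) :=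
    (continuous_const_add x).tendsto' 0 x (add_zero x) |>.eventually hV
  obtain ⟨δ, hδ, hball⟩ := Metric.eventually_nhds_iff_ball.1
    (((hasFDerivAt_iff_isLittleO_nhds_zero.1 hV').def hε).and hshift)
  filter_upwards [Metric.ball_mem_nhds 0 hδ] with u hu
  have hsegment : ∀ s ∈ Icc (0 : ℝ) 1, s • u ∈ Metric.ball (0 : E) δ := fun s hs => by
    rw [mem_ball_zero_iff, norm_smul, Real.norm_of_nonneg hs.1]
    exact (mul_le_of_le_one_left (norm_nonneg u) hs.2).trans_lt (mem_ball_zero_iff.1 hu)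
  -- Mean value inequality on the segment `[x, x + u]`; unlike a bound on the gradient of
  -- `u ↦ V (x + u) - V' x u - ½ B u u`, it does not need `B` to be symmetric.
  have hderiv : ∀ s ∈ Icc (0 : ℝ) 1, HasDerivWithinAt
      (fun s : ℝ => V (x + s • u) - s • V' x u - (s ^ 2 / 2) • B u u)
      (V' (x + s • u) u - V' x u - s • B u u) (Icc 0 1) s := by
    intro s hs
    have hline : HasDerivAt (fun s : ℝ => x + s • u) u s := by
      simpa using ((hasDerivAt_id s).smul_const u).const_add x
    have hsq : HasDerivAt (fun s : ℝ => s ^ 2 / 2) s s := by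
      simpa using (hasDerivAt_pow 2 s).div_const 2
    have := (((hball _ (hsegment s hs)).2.comp_hasDerivAt s hline).sub
      ((hasDerivAt_id s).smul_const (V' x u))).sub (hsq.smul_const (B u u))
    convert this.hasDerivWithinAt using 1
    · rfl
    · rw [one_smul]
  have hbound : ∀ s ∈ Ico (0 : ℝ) 1,
      ‖V' (x + s • u) u - V' x u - s • B u u‖ ≤ ε * ‖u‖ ^ 2 := by
    intro s hs
    have hsu := (hball _ (hsegment s (Ico_subset_Icc_self hs))).1
    calc ‖V' (x + s • u) u - V' x u - s • B u u‖
        = ‖(V' (x + s • u) - V' x - B (s • u)) u‖ := by simp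
      _ ≤ ε * ‖s • u‖ * ‖u‖ := (ContinuousLinearMap.le_opNorm _ _).trans
          (mul_le_mul_of_nonneg_right hsu (norm_nonneg u))
      _ ≤ ε * ‖u‖ * ‖u‖ := by
          gcongr
          rw [norm_smul, Real.norm_of_nonneg hs.1]
          exact mul_le_of_le_one_left (norm_nonneg u) hs.2.le
      _ = ε * ‖u‖ ^ 2 := by ring
  have := norm_image_sub_le_of_norm_deriv_le_segment_01' hderiv hbound
  simp only [one_smul, zero_smul, add_zero, one_pow, zero_pow two_ne_zero, zero_div, sub_zero] at this
  rw [norm_pow, norm_norm]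
  convert this using 2
  module

theorem tendsto_inv_sq_smul_sub_of_hasDerivAt (hV : ∀ᶠ y in 𝓝 x, HasFDerivAt V (V' y) y)
    (hV' : HasFDerivAt V' B x) (hcrit : V' x = 0) {γ : ℝ → E} {w : E}
    (hγ : HasDerivAt γ w 0) (hγ0 : γ 0 = x) :
    Tendsto (fun t : ℝ => (t ^ 2)⁻¹ • (V (γ t) - V x)) (𝓝[≠] 0)
      (𝓝 ((1 / 2 : ℝ) • B w w)) := by
  have hslope : Tendsto (fun t : ℝ => t⁻¹ • (γ t - x)) (𝓝[≠] 0) (𝓝 w) := by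
    refine (hasDerivAt_iff_tendsto_slope.1 hγ).congr fun t => ?_
    rw [slope_def_module, sub_zero, hγ0]
  have hquad : Tendsto (fun t : ℝ => (1 / 2 : ℝ) • B (t⁻¹ • (γ t - x)) (t⁻¹ • (γ t - x)))
      (𝓝[≠] 0) (𝓝 ((1 / 2 : ℝ) • B w w)) :=
    ((B.continuous₂.tendsto (w, w)).comp (hslope.prodMk_nhds hslope)).const_smul _
  have hremainder : Tendsto (fun t : ℝ => (t ^ 2)⁻¹ •
      (V (x + (γ t - x)) - V x - V' x (γ t - x) - (1 / 2 : ℝ) • B (γ t - x) (γ t - x)))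
      (𝓝[≠] 0) (𝓝 0) := by
    have hsmall : Tendsto (fun t : ℝ => γ t - x) (𝓝 0) (𝓝 0) := by
      simpa [hγ0] using (hγ.continuousAt.tendsto.sub_const x)
    have hlinear : (fun t : ℝ => γ t - x) =O[𝓝 0] fun t => t := by
      simpa [hγ0] using hγ.isBigO_sub
    exact (((isLittleO_sub_taylor_two hV hV').comp_tendsto hsmall).trans_isBigO
      (hlinear.norm_left.pow 2)).tendsto_inv_smul_nhds_zero.mono_left nhdsWithin_le_nhds
  refine (add_zero ((1 / 2 : ℝ) • B w w) ▸ hquad.add hremainder).congr fun t => ?_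
  simp only [map_smul, smul_apply, hcrit, add_sub_cancel, zero_apply, sub_zero, smul_smul]
  module

end Taylor

theorem inner_fderiv_gradient_apply {F : Type*} [NormedAddCommGroup F] [InnerProductSpace ℝ F]
    [CompleteSpace F] (V : F → ℝ) (x u w : F) :
    ⟪u, fderiv ℝ (gradient V) x w⟫ = fderiv ℝ (fderiv ℝ V) x w u := by
  change ⟪u, fderiv ℝ ((InnerProductSpace.toDual ℝ F).symm ∘ fderiv ℝ V) x w⟫ = _
  rw [LinearIsometryEquiv.comp_fderiv, real_inner_comm]
  exact InnerProductSpace.toDual_symm_apply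

/-- Lyapunov dissipation at a fixed point: if `V ∘ f ≤ V`, `f(x*) = x*`,
`∇V(x*) = 0` and `V ∈ C²`, then `∇²V(x*) − Df(x*)ᵀ ∇²V(x*) Df(x*)` is positive
semidefinite. -/
theorem stmt9 {d : ℕ}
    (f : EuclideanSpace ℝ (Fin d) → EuclideanSpace ℝ (Fin d))
    (V : EuclideanSpace ℝ (Fin d) → ℝ)
    (xstar : EuclideanSpace ℝ (Fin d))
    (A : EuclideanSpace ℝ (Fin d) →L[ℝ] EuclideanSpace ℝ (Fin d))
    (hf : HasFDerivAt f A xstar) (hfix : f xstar = xstar)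
    (hV : ContDiff ℝ 2 V) (hgrad : gradient V xstar = 0)
    (hdec : ∀ x, V (f x) ≤ V x) :
    ∀ v, ⟪A v, fderiv ℝ (gradient V) xstar (A v)⟫ ≤
      ⟪v, fderiv ℝ (gradient V) xstar v⟫ := by
  intro v
  rw [inner_fderiv_gradient_apply, inner_fderiv_gradient_apply]
  have hV₁ : ∀ᶠ y in 𝓝 xstar, HasFDerivAt V (fderiv ℝ V y) y :=
    Eventually.of_forall fun y => (hV.differentiable (by norm_num) y).hasFDerivAt
  have hV₂ : HasFDerivAt (fderiv ℝ V) (fderiv ℝ (fderiv ℝ V) xstar) xstar :=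
    ((hV.fderiv_right (m := 1) le_rfl).differentiable (by norm_num) xstar).hasFDerivAt
  have hcrit : fderiv ℝ V xstar = 0 := by
    rw [← toDual_gradient, hgrad, map_zero]
  have hline : HasDerivAt (fun t : ℝ => xstar + t • v) v 0 := by
    simpa using ((hasDerivAt_id (0 : ℝ)).smul_const v).const_add xstar
  have horbit : HasDerivAt (fun t : ℝ => f (xstar + t • v)) (A v) 0 :=
    (by simpa using hf : HasFDerivAt f A (xstar + (0 : ℝ) • v)).comp_hasDerivAt 0 hline
  have hle := le_of_tendsto_of_tendsto
    (tendsto_inv_sq_smul_sub_of_hasDerivAt hV₁ hV₂ hcrit horbit (by simpa using hfix))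
    (tendsto_inv_sq_smul_sub_of_hasDerivAt hV₁ hV₂ hcrit hline (by simp))
    (Eventually.of_forall fun t =>
      smul_le_smul_of_nonneg_left (sub_le_sub_right (hdec _) _) (by positivity))
  simp only [smul_eq_mul] at hle
  linarith
end
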